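/- arXiv:1609.04126 — 4 statements merged into one kernel-verified Lean document; each statement's English description precedes it below -/
import Mathlib

section
/- For the operator T₁φ = iωφ + iKf₁·(∫φg dω)·1 on L²(ℝ, g(ω)dω), a complex number λ not in i·supp(g) is an eigenvalue of T₁ if and only if ∫_ℝ g(ω)/(λ − iω) dω = 1/(iKf₁), and in that case v(ω) = 1/(λ − iω) is an associated eigenfunction. -/
/-!
Writing `c = ∫ φ g`, on the support of `g` the equation `iω φ + iKf₁ c = λ φ` forces
`φ = iKf₁ c / (λ - iω)`, so every eigenfunction is a multiple of the resolvent `v(ω) = 1/(λ - iω)`;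
integrating against `g` gives `c = iKf₁ c ∫ v g`, and `c ≠ 0` because `φ ≠ 0`. Conversely, if
`iKf₁ ∫ v g = 1` then `v` itself solves the equation, and it lies in `L²` because `λ` has positive
distance from the closed set `i · tsupp g`.
-/

open Complex MeasureTheory

theorem mul_one_div_add_eq_mul_one_div_iff {𝕜 : Type*} [Field 𝕜] {lam z b : 𝕜} (hz : lam ≠ z) :
    z * (1 / (lam - z)) + b = lam * (1 / (lam - z)) ↔ b = 1 := by
  have hne : lam - z ≠ 0 := sub_ne_zero.mpr hz
  constructor <;> intro h
  · field_simp at h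
    exact mul_left_cancel₀ hne (by linear_combination h)
  · rw [h]
    field_simp
    ring

section RankOnePerturbation

variable {α : Type*} [MeasurableSpace α] {μ : Measure α} {m : α → ℂ} {a lam : ℂ}

theorem ae_eq_const_mul_resolvent {φ : α → ℂ} {c : ℂ} (hres : ∀ᵐ x ∂μ, lam ≠ m x)
    (h : ∀ᵐ x ∂μ, m x * φ x + a * c = lam * φ x) :
    φ =ᵐ[μ] fun x => a * c * (1 / (lam - m x)) := by
  filter_upwards [hres, h] with x hx hφ
  rw [mul_one_div, eq_div_iff (sub_ne_zero.mpr hx)]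
  linear_combination -hφ

theorem resolvent_eigen_of_mul_integral_eq_one (hres : ∀ᵐ x ∂μ, lam ≠ m x)
    (h : a * ∫ x, 1 / (lam - m x) ∂μ = 1) :
    ∀ᵐ x ∂μ, m x * (1 / (lam - m x)) + a * ∫ y, 1 / (lam - m y) ∂μ = lam * (1 / (lam - m x)) := by
  filter_upwards [hres] with x hx
  exact (mul_one_div_add_eq_mul_one_div_iff hx).mpr h

theorem mul_integral_resolvent_eq_one_of_eigen {φ : α → ℂ} (hres : ∀ᵐ x ∂μ, lam ≠ m x)
    (hφ0 : ¬φ =ᵐ[μ] 0) (h : ∀ᵐ x ∂μ, m x * φ x + a * ∫ y, φ y ∂μ = lam * φ x) :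
    a * ∫ x, 1 / (lam - m x) ∂μ = 1 := by
  set c := ∫ y, φ y ∂μ
  have hφ := ae_eq_const_mul_resolvent hres h
  have hc : c = a * c * ∫ x, 1 / (lam - m x) ∂μ := by
    rw [← integral_const_mul]
    exact integral_congr_ae hφ
  have hc0 : c ≠ 0 := by
    rintro hc0
    exact hφ0 (hφ.trans (Filter.Eventually.of_forall fun x => by simp [hc0]))
  exact mul_left_cancel₀ hc0 (by linear_combination -hc)

theorem exists_eigen_iff_mul_integral_resolvent_eq_one [IsFiniteMeasure μ]
    (hres : ∀ᵐ x ∂μ, lam ≠ m x) (hr : MemLp (fun x => 1 / (lam - m x)) ⊤ μ) :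
    (∃ φ : α → ℂ, MemLp φ 2 μ ∧ ¬φ =ᵐ[μ] 0 ∧ Integrable φ μ ∧
        ∀ᵐ x ∂μ, m x * φ x + a * ∫ y, φ y ∂μ = lam * φ x) ↔
      a * ∫ x, 1 / (lam - m x) ∂μ = 1 := by
  refine ⟨fun ⟨φ, _, hφ0, _, h⟩ => mul_integral_resolvent_eq_one_of_eigen hres hφ0 h,
    fun h => ⟨_, hr.mono_exponent le_top, fun hr0 => ?_, hr.integrable le_top,
      resolvent_eigen_of_mul_integral_eq_one hres h⟩⟩
  rw [integral_congr_ae hr0] at h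
  simp at h

end RankOnePerturbation

theorem exists_pos_le_norm_sub_I_mul {S : Set ℝ} (hS : IsClosed S) {lam : ℂ}
    (hlam : ∀ ω ∈ S, lam ≠ I * ω) : ∃ ε > 0, ∀ ω ∈ S, ε ≤ ‖lam - I * ω‖ := by
  have hI : Isometry fun ω : ℝ => I * ω :=
    Isometry.of_dist_eq fun x y => by
      simp [dist_eq, ← mul_sub, ← ofReal_sub, Real.dist_eq]
  have hT : IsClosed ((fun ω : ℝ => I * ω) '' S) := hI.isClosedEmbedding.isClosedMap S hS
  obtain ⟨ε, hε, hball⟩ := Metric.isOpen_iff.mp hT.isOpen_compl lam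
    (by rintro ⟨ω, hω, rfl⟩; exact hlam ω hω rfl)
  refine ⟨ε, hε, fun ω hω => ?_⟩
  by_contra! hlt
  exact hball (by simpa [dist_eq, norm_sub_rev] using hlt) ⟨ω, hω, rfl⟩

theorem ae_mem_tsupport_withDensity_ofReal {X : Type*} [MeasurableSpace X] [TopologicalSpace X]
    {ν : Measure X} {g : X → ℝ} (hg : AEMeasurable g ν) :
    ∀ᵐ x ∂ν.withDensity (fun x => ENNReal.ofReal (g x)), x ∈ tsupport g := by
  rw [ae_withDensity_iff' hg.ennreal_ofReal]
  refine Filter.Eventually.of_forall fun x hx => subset_tsupport g ?_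
  intro hg0
  simp [hg0] at hx

theorem integral_withDensity_ofReal {X : Type*} [MeasurableSpace X] {ν : Measure X} {g : X → ℝ}
    (hg : AEMeasurable g ν) (hg0 : ∀ x, 0 ≤ g x) (f : X → ℂ) :
    ∫ x, f x ∂ν.withDensity (fun x => ENNReal.ofReal (g x)) = ∫ x, (g x : ℂ) * f x ∂ν := by
  rw [integral_withDensity_eq_integral_toReal_smul₀ hg.ennreal_ofReal
    (Filter.Eventually.of_forall fun _ => ENNReal.ofReal_lt_top)]
  simp [ENNReal.toReal_ofReal (hg0 _), real_smul]

theorem eigenvalue_characterization_general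
    (g : ℝ → ℝ) (hg : Integrable g) (hg0 : ∀ ω, 0 ≤ g ω)
    (K : ℝ) (hK : 0 < K) (f₁ : ℂ) (hf₁ : f₁ ≠ 0)
    (μ : Measure ℝ) (hμ : μ = MeasureTheory.volume.withDensity (fun ω => ENNReal.ofReal (g ω)))
    (lam : ℂ) (hlam : ∀ ω ∈ tsupport g, lam ≠ Complex.I * ω) :
    ((∃ φ : ℝ → ℂ, MemLp φ 2 μ ∧ ¬(φ =ᵐ[μ] 0) ∧
        (Integrable φ μ) ∧
        (∀ᵐ (ω : ℝ) ∂μ, Complex.I * (ω : ℂ) * φ ω + Complex.I * K * f₁ * (∫ x, φ x ∂μ) = lam * φ ω))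
      ↔ (∫ ω : ℝ, (g ω : ℂ) / (lam - Complex.I * ω)) = 1 / (Complex.I * K * f₁)) ∧
    ((∫ ω : ℝ, (g ω : ℂ) / (lam - Complex.I * ω)) = 1 / (Complex.I * K * f₁) →
      ∀ᵐ (ω : ℝ) ∂μ, Complex.I * (ω : ℂ) * (1 / (lam - Complex.I * (ω : ℂ))) +
          Complex.I * K * f₁ * (∫ x : ℝ, 1 / (lam - Complex.I * (x : ℂ)) ∂μ) =
        lam * (1 / (lam - Complex.I * (ω : ℂ)))) := by
  have : IsFiniteMeasure μ := hμ ▸ isFiniteMeasure_withDensity_ofReal hg.2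
  have hS : ∀ᵐ ω ∂μ, ω ∈ tsupport g := hμ ▸ ae_mem_tsupport_withDensity_ofReal hg.aemeasurable
  have hres : ∀ᵐ (ω : ℝ) ∂μ, lam ≠ I * ω := by
    filter_upwards [hS] with ω hω using hlam ω hω
  obtain ⟨ε, hε, hεle⟩ := exists_pos_le_norm_sub_I_mul (isClosed_tsupport g) hlam
  have hr : MemLp (fun ω : ℝ => 1 / (lam - I * ω)) ⊤ μ := by
    refine memLp_top_of_bound (Measurable.aestronglyMeasurable (by fun_prop)) ε⁻¹ ?_
    filter_upwards [hS] with ω hω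
    rw [norm_div, norm_one, one_div]
    exact inv_anti₀ hε (hεle ω hω)
  have hJ : (∫ ω : ℝ, (g ω : ℂ) / (lam - I * ω)) = 1 / (I * K * f₁) ↔
      I * K * f₁ * ∫ ω, 1 / (lam - I * ω) ∂μ = 1 := by
    have haK : I * K * f₁ ≠ 0 := by simp [hK.ne', hf₁]
    rw [hμ, integral_withDensity_ofReal hg.aemeasurable hg0, eq_div_iff haK, mul_comm]
    simp only [mul_one_div]
  rw [hJ]
  exact ⟨exists_eigen_iff_mul_integral_resolvent_eq_one hres hr,
    resolvent_eigen_of_mul_integral_eq_one hres⟩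

/-- For `T₁ φ = iω φ + iK f₁ (∫ φ g) · 1` on `L²(ℝ, g(ω)dω)`, a complex number `λ`
not in `i · supp g` is an eigenvalue of `T₁` iff `∫ g(ω)/(λ - iω) dω = 1/(iKf₁)`,
and in that case `v(ω) = 1/(λ - iω)` is an associated eigenfunction. -/
theorem eigenvalue_characterization
    (g : ℝ → ℝ) (hg : Integrable g) (hg0 : ∀ ω, 0 ≤ g ω)
    (hgmass : ∫ ω, g ω = 1)
    (K : ℝ) (hK : 0 < K) (f₁ : ℂ) (hf₁ : f₁ ≠ 0)
    (μ : Measure ℝ) (hμ : μ = MeasureTheory.volume.withDensity (fun ω => ENNReal.ofReal (g ω)))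
    (lam : ℂ) (hlam : ∀ ω ∈ tsupport g, lam ≠ Complex.I * ω) :
    ((∃ φ : ℝ → ℂ, MemLp φ 2 μ ∧ ¬(φ =ᵐ[μ] 0) ∧
        (Integrable φ μ) ∧
        (∀ᵐ (ω : ℝ) ∂μ, Complex.I * (ω : ℂ) * φ ω + Complex.I * K * f₁ * (∫ x, φ x ∂μ) = lam * φ ω))
      ↔ (∫ ω : ℝ, (g ω : ℂ) / (lam - Complex.I * ω)) = 1 / (Complex.I * K * f₁)) ∧
    ((∫ ω : ℝ, (g ω : ℂ) / (lam - Complex.I * ω)) = 1 / (Complex.I * K * f₁) →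
      ∀ᵐ (ω : ℝ) ∂μ, Complex.I * (ω : ℂ) * (1 / (lam - Complex.I * (ω : ℂ))) +
          Complex.I * K * f₁ * (∫ x : ℝ, 1 / (lam - Complex.I * (x : ℂ)) ∂μ) =
        lam * (1 / (lam - Complex.I * (ω : ℂ)))) :=
  eigenvalue_characterization_general g hg hg0 K hK f₁ hf₁ μ hμ lam hlam
end

section
/- Let g be an integrable probability density on ℝ which is bounded. Then for all x > 0 and y ∈ ℝ, ∫_ℝ x g(ω)/(x² + (y−ω)²) dω ≤ π‖g‖_∞. Consequently, if K > 0 is sufficiently small (K < 2cos α₁/(π‖g‖_∞)), the equation ∫_ℝ x g(ω)/(x²+(y−ω)²) dω = (2/K)cos α₁ has no solution (x,y) with x > 0, i.e. T₁ has no eigenvalues. -/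
open Real MeasureTheory

lemma poisson_kernel_integral {x : ℝ} (hx : 0 < x) (y : ℝ) :
    ∫ ω : ℝ, x / (x ^ 2 + (y - ω) ^ 2) = π := by
  have h1 : ∀ ω : ℝ, x / (x ^ 2 + (y - ω) ^ 2)
      = x⁻¹ * (1 + ((ω - y) / x) ^ 2)⁻¹ := by
    intro ω
    have hx2 : (0:ℝ) < x ^ 2 + (y - ω) ^ 2 := by positivity
    rw [div_pow]
    field_simp
    ring
  simp_rw [h1]
  rw [integral_const_mul]
  have h2 : (∫ ω : ℝ, (1 + ((ω - y) / x) ^ 2)⁻¹)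
      = ∫ ω : ℝ, (1 + (ω / x) ^ 2)⁻¹ :=
    integral_sub_right_eq_self (fun ω => (1 + (ω / x) ^ 2)⁻¹) y
  rw [h2, MeasureTheory.Measure.integral_comp_div (fun u : ℝ => (1 + u ^ 2)⁻¹) x,
    integral_univ_inv_one_add_sq, abs_of_pos hx, smul_eq_mul]
  field_simp

lemma poisson_kernel_integrable {x : ℝ} (hx : 0 < x) (y : ℝ) :
    Integrable (fun ω : ℝ => x / (x ^ 2 + (y - ω) ^ 2)) := by
  have h1 : ∀ ω : ℝ, x / (x ^ 2 + (y - ω) ^ 2)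
      = x⁻¹ * (1 + ((ω - y) / x) ^ 2)⁻¹ := by
    intro ω
    have hx2 : (0:ℝ) < x ^ 2 + (y - ω) ^ 2 := by positivity
    rw [div_pow]
    field_simp
    ring
  simp_rw [h1]
  apply Integrable.const_mul
  exact (integrable_inv_one_add_sq.comp_div hx.ne').comp_sub_right y

/-- Poisson kernel bound: for a bounded integrable density `g` with `g ≤ M`,
one has `∫ x g(ω)/(x² + (y-ω)²) dω ≤ π M` for all `x > 0`, `y ∈ ℝ`.
Consequently, if `K < 2 cos α₁/(π M)`, the equation
`∫ x g(ω)/(x²+(y-ω)²) dω = (2/K) cos α₁` has no solution with `x > 0`,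
i.e. `T₁` has no eigenvalues. -/
theorem no_eigenvalues_small_coupling
    (g : ℝ → ℝ) (hg : Integrable g) (hg0 : ∀ ω, 0 ≤ g ω) (hgmass : ∫ ω, g ω = 1)
    (M : ℝ) (hM : ∀ ω, g ω ≤ M)
    (α₁ : ℝ) (hα : 0 < Real.cos α₁) (K : ℝ) (hK : 0 < K) :
    (∀ x : ℝ, 0 < x → ∀ y : ℝ,
      (∫ ω : ℝ, x * g ω / (x ^ 2 + (y - ω) ^ 2)) ≤ π * M) ∧
    (K < 2 * Real.cos α₁ / (π * M) →
      ¬ ∃ x y : ℝ, 0 < x ∧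
        (∫ ω : ℝ, x * g ω / (x ^ 2 + (y - ω) ^ 2)) = (2 / K) * Real.cos α₁) := by
  have hbound : ∀ x : ℝ, 0 < x → ∀ y : ℝ,
      (∫ ω : ℝ, x * g ω / (x ^ 2 + (y - ω) ^ 2)) ≤ π * M := by
    intro x hx y
    have hker := poisson_kernel_integrable hx y
    have hMk : Integrable (fun ω : ℝ => M * (x / (x ^ 2 + (y - ω) ^ 2))) :=
      hker.const_mul M
    have hle : ∀ ω : ℝ, x * g ω / (x ^ 2 + (y - ω) ^ 2)
        ≤ M * (x / (x ^ 2 + (y - ω) ^ 2)) := by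
      intro ω
      have hx2 : (0:ℝ) < x ^ 2 + (y - ω) ^ 2 := by positivity
      calc x * g ω / (x ^ 2 + (y - ω) ^ 2)
          ≤ x * M / (x ^ 2 + (y - ω) ^ 2) := by
            gcongr
            exact hM ω
        _ = M * (x / (x ^ 2 + (y - ω) ^ 2)) := by ring
    have hden : Measurable fun ω : ℝ => x ^ 2 + (y - ω) ^ 2 := by fun_prop
    have hm : AEStronglyMeasurable (fun ω : ℝ => x * g ω / (x ^ 2 + (y - ω) ^ 2)) volume :=
      ((hg.aemeasurable.const_mul x).div hden.aemeasurable).aestronglyMeasurable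
    have hb : ∀ ω : ℝ, ‖x * g ω / (x ^ 2 + (y - ω) ^ 2)‖ ≤ x⁻¹ * g ω := by
      intro ω
      have hx2 : (0:ℝ) < x ^ 2 + (y - ω) ^ 2 := by positivity
      have h0 : 0 ≤ x * g ω / (x ^ 2 + (y - ω) ^ 2) :=
        div_nonneg (mul_nonneg hx.le (hg0 ω)) hx2.le
      rw [Real.norm_of_nonneg h0, div_le_iff₀ hx2]
      calc x * g ω = x⁻¹ * g ω * x ^ 2 := by field_simp
        _ ≤ x⁻¹ * g ω * (x ^ 2 + (y - ω) ^ 2) := by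
            apply mul_le_mul_of_nonneg_left _ (mul_nonneg (by positivity) (hg0 ω))
            linarith [sq_nonneg (y - ω)]
    have hint : Integrable (fun ω : ℝ => x * g ω / (x ^ 2 + (y - ω) ^ 2)) :=
      (hg.const_mul x⁻¹).mono' hm (Filter.Eventually.of_forall hb)
    calc (∫ ω : ℝ, x * g ω / (x ^ 2 + (y - ω) ^ 2))
        ≤ ∫ ω : ℝ, M * (x / (x ^ 2 + (y - ω) ^ 2)) := integral_mono hint hMk hle
      _ = M * π := by rw [integral_const_mul, poisson_kernel_integral hx y]
      _ = π * M := mul_comm _ _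
  refine ⟨hbound, fun hKs ⟨x, y, hx, heq⟩ => ?_⟩
  have hM0 : 0 ≤ M := le_trans (hg0 0) (hM 0)
  have hπM : 0 < π * M := by
    by_contra h
    push_neg at h
    have : 2 * Real.cos α₁ / (π * M) ≤ 0 := by
      rcases lt_or_eq_of_le h with h' | h'
      · exact le_of_lt (div_neg_of_pos_of_neg (by linarith) h')
      · simp [h']
    linarith
  have h1 : (2 / K) * Real.cos α₁ ≤ π * M := heq ▸ hbound x hx y
  have h3 : K * (π * M) < 2 * Real.cos α₁ := (lt_div_iff₀ hπM).mp hKs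
  have h2 : π * M < (2 / K) * Real.cos α₁ := by
    rw [div_mul_eq_mul_div, lt_div_iff₀ hK]
    calc π * M * K = K * (π * M) := by ring
      _ < 2 * Real.cos α₁ := h3
  linarith
end

section
/- Let λ_c be a simple eigenvalue of T₁ = iω + iKf₁𝒫, i.e. a simple root of 1 − iKf₁D(λ) = 0 with Re(λ_c) > 0. Then the Riesz projection Π_c = (1/2πi)∮_γ (λ − T₁)^{−1} dλ around λ_c is the rank-one operator Π_c φ = [−1/D'(λ_c)]·((λ_c − iω)^{−1}φ, P₀)·(λ_c − iω)^{−1}. -/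
/-!
Write `h λ = 1 - iKf₁D(λ)`. Since `h` has a simple zero at `λ_c` and no other zero on the closed
disc, `h λ = (λ - λ_c) q λ` with `q = dslope h λ_c` holomorphic and zero-free there. Putting the
integrand over the common denominator `h` gives `u / h = (λ - λ_c)⁻¹ (u / q)` with `u`
holomorphic, so Cauchy's integral formula yields the residue `u λ_c / h' λ_c`; the `φ ω / (λ - iω)`
part of `u` carries the factor `h λ_c = 0` and drops out. Holomorphy of
`λ ↦ ∫ φ g / (λ - iω)` on `Re λ > 0` comes from differentiating under the integral sign: on the
ball of radius `Re λ₀ / 2` about `λ₀`, `|λ - iω|⁻²` is dominated by `4 / (Re λ₀ |λ₀ - iω|)`.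
-/

open Complex Real MeasureTheory Metric

theorem re_le_norm_sub_I_mul (lam : ℂ) (x : ℝ) : lam.re ≤ ‖lam - I * x‖ := by
  simpa using re_le_norm (lam - I * x)

theorem sub_I_mul_ne_zero {lam : ℂ} (hlam : 0 < lam.re) (x : ℝ) : lam - I * x ≠ 0 :=
  norm_pos_iff.mp (hlam.trans_le (re_le_norm_sub_I_mul lam x))

theorem half_re_lt_re {lam lam₀ : ℂ} (hlam : ‖lam - lam₀‖ < lam₀.re / 2) :
    lam₀.re / 2 < lam.re := by
  have := re_le_norm (lam₀ - lam)
  rw [norm_sub_rev, sub_re] at this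
  linarith

theorem re_mul_norm_sub_I_mul_le {lam lam₀ : ℂ} (hlam : ‖lam - lam₀‖ < lam₀.re / 2) (x : ℝ) :
    lam₀.re * ‖lam₀ - I * x‖ ≤ 4 * ‖lam - I * x‖ ^ 2 := by
  have h₁ : lam₀.re ≤ 2 * ‖lam - I * x‖ := by
    linarith [half_re_lt_re hlam, re_le_norm_sub_I_mul lam x]
  have h₂ : ‖lam₀ - I * x‖ ≤ 2 * ‖lam - I * x‖ := by
    have := norm_sub_le_norm_sub_add_norm_sub (lam₀ - I * x) (lam - I * x) 0
    simp only [sub_sub_sub_cancel_right, sub_zero] at this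
    linarith [norm_sub_rev lam₀ lam]
  nlinarith [norm_nonneg (lam₀ - I * x)]

theorem hasDerivAt_div_sub (a : ℂ) {lam w : ℂ} (hne : lam - w ≠ 0) :
    HasDerivAt (fun z => a / (z - w)) (-a / (lam - w) ^ 2) lam := by
  simp only [div_eq_mul_inv]
  refine ((((hasDerivAt_id lam).sub_const w).inv hne).const_mul a).congr_deriv ?_
  simp only [id]
  ring

section CauchyTransform

variable {μ : Measure ℝ} {f : ℝ → ℂ}

theorem aestronglyMeasurable_div_sub_I_mul
    (hf : AEStronglyMeasurable f μ) {lam : ℂ} (hlam : 0 < lam.re) :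
    AEStronglyMeasurable (fun x => f x / (lam - I * x)) μ := by
  refine (hf.mul (((by fun_prop : Continuous fun x : ℝ => lam - I * x).inv₀
    (sub_I_mul_ne_zero hlam)).aestronglyMeasurable)).congr (ae_of_all _ fun x => ?_)
  exact (div_eq_mul_inv _ _).symm

theorem aestronglyMeasurable_of_integrable_div_sub_I_mul {lam : ℂ}
    (hlam : 0 < lam.re) (hf : Integrable (fun x => f x / (lam - I * x)) μ) :
    AEStronglyMeasurable f μ :=
  (hf.aestronglyMeasurable.mul
    (by fun_prop : Continuous fun x : ℝ => lam - I * x).aestronglyMeasurable).congr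
    (ae_of_all _ fun x => div_mul_cancel₀ _ (sub_I_mul_ne_zero hlam x))

theorem differentiableAt_integral_div_sub_I_mul {lam₀ : ℂ}
    (h₀ : 0 < lam₀.re) (hf : Integrable (fun x => f x / (lam₀ - I * x)) μ) :
    DifferentiableAt ℂ (fun lam => ∫ x, f x / (lam - I * x) ∂μ) lam₀ := by
  set c := lam₀.re
  have hre : ∀ lam ∈ ball lam₀ (c / 2), 0 < lam.re := fun lam hlam =>
    (half_pos h₀).trans (half_re_lt_re (mem_ball_iff_norm.mp hlam))
  have hmeas := aestronglyMeasurable_of_integrable_div_sub_I_mul h₀ hf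
  refine (hasDerivAt_integral_of_dominated_loc_of_deriv_le (ball_mem_nhds lam₀ (half_pos h₀))
    (F' := fun lam x => -f x / (lam - I * x) ^ 2) (bound := fun x => 4 / c * ‖f x / (lam₀ - I * x)‖)
    ?_ hf ?_ ?_ (hf.norm.const_mul _) ?_).2.differentiableAt
  · filter_upwards [ball_mem_nhds lam₀ (half_pos h₀)] with lam hlam
    exact aestronglyMeasurable_div_sub_I_mul hmeas (hre lam hlam)
  · refine (aestronglyMeasurable_div_sub_I_mul (aestronglyMeasurable_div_sub_I_mul hmeas.neg h₀)
      h₀).congr (ae_of_all _ fun x => ?_)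
    simp only [Pi.neg_apply, div_div, sq]
  · refine ae_of_all _ fun x lam hlam => ?_
    have hc := re_mul_norm_sub_I_mul_le (mem_ball_iff_norm.mp hlam) x
    have hpos : 0 < c * ‖lam₀ - I * x‖ := mul_pos h₀ (norm_pos_iff.mpr (sub_I_mul_ne_zero h₀ x))
    calc ‖-f x / (lam - I * x) ^ 2‖ = ‖f x‖ / ‖lam - I * x‖ ^ 2 := by
          rw [norm_div, norm_neg, norm_pow]
      _ ≤ ‖f x‖ / (c * ‖lam₀ - I * x‖ / 4) :=
          div_le_div_of_nonneg_left (norm_nonneg _) (by positivity) (by linarith)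
      _ = 4 / c * ‖f x / (lam₀ - I * x)‖ := by
          rw [norm_div]; field_simp
  · exact ae_of_all _ fun x lam hlam =>
      hasDerivAt_div_sub (f x) (sub_I_mul_ne_zero (hre lam hlam) x)

end CauchyTransform

theorem two_pi_I_inv_mul_circleIntegral_div_of_simple_zero {c : ℂ} {R : ℝ} (hR : 0 < R)
    {u h : ℂ → ℂ} (hu : DifferentiableOn ℂ u (closedBall c R))
    (hh : DifferentiableOn ℂ h (closedBall c R)) (hc : h c = 0) (hderiv : deriv h c ≠ 0)
    (hne : ∀ z ∈ closedBall c R, z ≠ c → h z ≠ 0) :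
    (2 * π * I)⁻¹ * ∮ z in C(c, R), u z / h z = u c / deriv h c := by
  set q := dslope h c
  have hqc : q c = deriv h c := dslope_same h c
  have hfac : ∀ z, h z = (z - c) * q z := fun z => by
    rw [← smul_eq_mul, sub_smul_dslope, hc, sub_zero]
  have hq : DifferentiableOn ℂ q (closedBall c R) :=
    (differentiableOn_dslope (closedBall_mem_nhds c hR)).2 hh
  have hq₀ : ∀ z ∈ closedBall c R, q z ≠ 0 := fun z hz => by
    rcases eq_or_ne z c with rfl | hzc
    · rwa [hqc]
    · exact right_ne_zero_of_mul (hfac z ▸ hne z hz hzc)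
  have hsplit : (fun z => u z / h z) = fun z => (z - c)⁻¹ • (u z / q z) := funext fun z => by
    rw [hfac, smul_eq_mul, mul_comm, div_mul_eq_div_div, div_eq_mul_inv, mul_comm]
  have hcauchy : ∮ z in C(c, R), (z - c)⁻¹ • (u z / q z) = (2 * π * I) • (u c / q c) :=
    (hu.div hq hq₀).circleIntegral_sub_inv_smul (mem_ball_self hR)
  rw [hsplit, hcauchy, smul_eq_mul, inv_mul_cancel_left₀ two_pi_I_ne_zero, hqc]

theorem two_pi_I_inv_mul_circleIntegral_resolvent {c w a b : ℂ} {R : ℝ} (hR : 0 < R)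
    {D F : ℂ → ℂ} (hD : DifferentiableOn ℂ D (closedBall c R))
    (hF : DifferentiableOn ℂ F (closedBall c R)) (hw : w ∉ closedBall c R)
    (hc : 1 - a * D c = 0) (hderiv : deriv D c ≠ 0)
    (hne : ∀ z ∈ closedBall c R, z ≠ c → 1 - a * D z ≠ 0) :
    (2 * π * I)⁻¹ * ∮ z in C(c, R), (b / (z - w) + a / (1 - a * D z) * F z / (z - w))
      = -1 / deriv D c * F c * (1 / (c - w)) := by
  set h : ℂ → ℂ := fun z => 1 - a * D z
  have ha : a ≠ 0 := fun ha₀ => by simp [ha₀] at hc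
  have hw' : ∀ z ∈ closedBall c R, z - w ≠ 0 := fun z hz =>
    sub_ne_zero.mpr (ne_of_mem_of_not_mem hz hw)
  have hh : DifferentiableOn ℂ h (closedBall c R) := (hD.const_mul a).const_sub 1
  have hderiv_h : deriv h c = -(a * deriv D c) :=
    (((hD.differentiableAt (closedBall_mem_nhds c hR)).hasDerivAt.const_mul a).const_sub 1).deriv
  set u : ℂ → ℂ := fun z => b / (z - w) * h z + a * F z / (z - w)
  have hu : DifferentiableOn ℂ u (closedBall c R) :=
    ((differentiableOn_const _).div (differentiableOn_id.sub_const _) hw').mul hh |>.add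
      ((hF.const_mul a).div (differentiableOn_id.sub_const _) hw')
  have hsphere : Set.EqOn (fun z => b / (z - w) + a / h z * F z / (z - w))
      (fun z => u z / h z) (sphere c R) := fun z hz => by
    have := hne z (sphere_subset_closedBall hz) (ne_of_mem_sphere hz hR.ne')
    simp only [u, h] at this ⊢
    field_simp
  rw [circleIntegral.integral_congr hR.le hsphere,
    two_pi_I_inv_mul_circleIntegral_div_of_simple_zero hR hu hh hc
      (hderiv_h ▸ neg_ne_zero.mpr (mul_ne_zero ha hderiv)) hne, hderiv_h]
  have := hw' c (mem_closedBall_self hR.le)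
  simp only [u, h, hc, mul_zero, zero_add]
  field_simp

theorem riesz_projection_formula_general
    (g : ℝ → ℝ)
    (K : ℝ) (f₁ : ℂ)
    (D : ℂ → ℂ)
    (lamc : ℂ)
    (heig : 1 - Complex.I * K * f₁ * D lamc = 0)
    (hsimple : deriv D lamc ≠ 0)
    (r : ℝ) (hr : 0 < r)
    (hball : ∀ lam ∈ Metric.closedBall lamc r, 0 < lam.re ∧ DifferentiableAt ℂ D lam)
    (honly : ∀ lam ∈ Metric.closedBall lamc r, lam ≠ lamc →
      1 - Complex.I * K * f₁ * D lam ≠ 0)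
    (φ : ℝ → ℂ)
    (hφint : ∀ lam ∈ Metric.closedBall lamc r,
      Integrable (fun ω : ℝ => φ ω / (lam - Complex.I * ω) * g ω)) :
    ∀ ω : ℝ,
      (2 * π * Complex.I)⁻¹ *
        (∮ lam in C(lamc, r),
          (φ ω / (lam - Complex.I * ω) +
            (Complex.I * K * f₁ / (1 - Complex.I * K * f₁ * D lam)) *
              (∫ x : ℝ, φ x / (lam - Complex.I * x) * g x) / (lam - Complex.I * ω)))
      = (-1 / deriv D lamc) *
          (∫ x : ℝ, φ x / (lamc - Complex.I * x) * g x) * (1 / (lamc - Complex.I * ω)) := by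
  intro ω
  have hF : DifferentiableOn ℂ (fun lam => ∫ x : ℝ, φ x / (lam - I * x) * g x)
      (closedBall lamc r) := fun lam hlam => by
    have hint := hφint lam hlam
    simp only [div_mul_eq_mul_div] at hint ⊢
    exact (differentiableAt_integral_div_sub_I_mul (hball lam hlam).1 hint).differentiableWithinAt
  have hω : I * ω ∉ closedBall lamc r := fun hmem => by simpa using (hball _ hmem).1
  exact two_pi_I_inv_mul_circleIntegral_resolvent hr
    (fun lam hlam => (hball lam hlam).2.differentiableWithinAt) hF hω heig hsimple honly

/-- Riesz projection at a simple eigenvalue `λ_c` of `T₁ = iω + iKf₁𝒫`: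
the contour integral `(1/2πi)∮ (λ - T₁)⁻¹ dλ` around `λ_c` is the rank-one
operator `Π_c φ = [-1/D'(λ_c)]((λ_c - iω)⁻¹φ, P₀)(λ_c - iω)⁻¹`. -/
theorem riesz_projection_formula
    (g : ℝ → ℝ) (hg : Integrable g)
    (K : ℝ) (f₁ : ℂ) (hf₁ : f₁ ≠ 0)
    (D : ℂ → ℂ)
    (hD : ∀ lam : ℂ, 0 < lam.re →
      D lam = ∫ ω : ℝ, (g ω : ℂ) / (lam - Complex.I * ω))
    (lamc : ℂ) (hlamc : 0 < lamc.re)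
    (heig : 1 - Complex.I * K * f₁ * D lamc = 0)
    (hsimple : deriv D lamc ≠ 0)
    (r : ℝ) (hr : 0 < r)
    (hball : ∀ lam ∈ Metric.closedBall lamc r, 0 < lam.re ∧ DifferentiableAt ℂ D lam)
    (honly : ∀ lam ∈ Metric.closedBall lamc r, lam ≠ lamc →
      1 - Complex.I * K * f₁ * D lam ≠ 0)
    (φ : ℝ → ℂ)
    (hφint : ∀ lam ∈ Metric.closedBall lamc r,
      Integrable (fun ω : ℝ => φ ω / (lam - Complex.I * ω) * g ω)) :
    ∀ ω : ℝ,
      (2 * π * Complex.I)⁻¹ *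
        (∮ lam in C(lamc, r),
          (φ ω / (lam - Complex.I * ω) +
            (Complex.I * K * f₁ / (1 - Complex.I * K * f₁ * D lam)) *
              (∫ x : ℝ, φ x / (lam - Complex.I * x) * g x) / (lam - Complex.I * ω)))
      = (-1 / deriv D lamc) *
          (∫ x : ℝ, φ x / (lamc - Complex.I * x) * g x) * (1 / (lamc - Complex.I * ω)) :=
  riesz_projection_formula_general g K f₁ D lamc heig hsimple r hr hball honly φ hφint
end

section
/- Define T₂^{−1} : H₊ → H₊' by ⟨T₂^{−1}φ | ψ*⟩ = −(1/2) lim_{λ→+0} ∫_ℝ φ(ω)ψ(ω)g(ω)/(λ − iω) dω, where the limit is from the right half plane. Then T₂^{−1}(T₂φ) = φ for all φ ∈ H₊, where T₂ is the multiplication operator (T₂φ)(ω) = 2iω φ(ω). -/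
/-!
Since `|ω| ≤ |x - iω|`, the integrand `2iω f(ω) / (x - iω)` is dominated by `2|f|`, and for
`ω ≠ 0` it tends to `-2 f(ω)` as `x → 0`. Dominated convergence gives the limit `-2 ∫ f`; the
single point `ω = 0`, where the pointwise limit fails, is a null set.
-/

open Complex Real MeasureTheory Filter Topology

lemma continuous_comp_ofReal {f : ℂ → ℂ} (hf : ∀ ω : ℝ, ContinuousAt f ω) :
    Continuous fun ω : ℝ => f ω :=
  continuous_iff_continuousAt.2 fun ω => (hf ω).comp continuous_ofReal.continuousAt

lemma integrable_of_norm_le_div_one_add_sq {E : Type*} [NormedAddCommGroup E] {f : ℝ → E}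
    (hf : Continuous f) (K : ℝ) (hK : ∀ ω, ‖f ω‖ ≤ K / (1 + ω ^ 2)) : Integrable f :=
  (integrable_inv_one_add_sq.const_mul K).mono' hf.aestronglyMeasurable
    (ae_of_all _ fun ω => (hK ω).trans_eq (div_eq_mul_inv _ _))

lemma norm_ofReal_le_norm_ofReal_sub_I_mul (x ω : ℝ) : ‖(ω : ℂ)‖ ≤ ‖(x : ℂ) - I * ω‖ := by
  simpa using abs_im_le_norm ((x : ℂ) - I * ω)

lemma norm_two_I_mul_div_sub_I_mul_le (x ω : ℝ) (c : ℂ) :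
    ‖2 * I * ω * c / ((x : ℂ) - I * ω)‖ ≤ 2 * ‖c‖ := by
  rcases eq_or_ne (ω : ℂ) 0 with hω | hω
  · simp [hω]
  have hden : 0 < ‖(x : ℂ) - I * ω‖ := (norm_pos_iff.2 hω).trans_le
    (norm_ofReal_le_norm_ofReal_sub_I_mul x ω)
  rw [norm_div, div_le_iff₀ hden, norm_mul, norm_mul, norm_mul]
  calc ‖(2 : ℂ)‖ * ‖I‖ * ‖(ω : ℂ)‖ * ‖c‖ = 2 * ‖c‖ * ‖(ω : ℂ)‖ := by
        rw [Complex.norm_two, norm_I]; ring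
    _ ≤ 2 * ‖c‖ * ‖(x : ℂ) - I * ω‖ := by
      gcongr; exact norm_ofReal_le_norm_ofReal_sub_I_mul x ω

lemma tendsto_two_I_mul_div_sub_I_mul {ω : ℝ} (hω : ω ≠ 0) (c : ℂ) :
    Tendsto (fun x : ℝ => 2 * I * ω * c / ((x : ℂ) - I * ω)) (𝓝 0) (𝓝 (-2 * c)) := by
  have hω' : (ω : ℂ) ≠ 0 := ofReal_ne_zero.2 hω
  have hIω : I * (ω : ℂ) ≠ 0 := mul_ne_zero I_ne_zero hω'
  have hcont : ContinuousAt (fun x : ℝ => 2 * I * ω * c / ((x : ℂ) - I * ω)) 0 :=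
    continuousAt_const.div (continuous_ofReal.continuousAt.sub continuousAt_const)
      (by simpa using hIω)
  convert hcont.tendsto using 2
  simp only [ofReal_zero, zero_sub]
  field_simp

theorem tendsto_integral_two_I_mul_div_sub_I_mul {f : ℝ → ℂ} (hf : Integrable f) :
    Tendsto (fun x : ℝ => ∫ ω : ℝ, 2 * I * ω * f ω / ((x : ℂ) - I * ω)) (𝓝 0)
      (𝓝 (-2 * ∫ ω, f ω)) := by
  rw [← integral_const_mul]
  refine tendsto_integral_filter_of_dominated_convergence (fun ω => 2 * ‖f ω‖) ?_ ?_
    (hf.norm.const_mul 2) ?_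
  · refine Eventually.of_forall fun x => ?_
    have hden : Measurable fun ω : ℝ => 2 * I * ω / ((x : ℂ) - I * ω) := by fun_prop
    refine (hden.aestronglyMeasurable.mul hf.aestronglyMeasurable).congr
      (ae_of_all _ fun ω => ?_)
    simp only [Pi.mul_apply]
    ring
  · exact Eventually.of_forall fun x =>
      ae_of_all _ fun ω => norm_two_I_mul_div_sub_I_mul_le x ω (f ω)
  · filter_upwards [measure_singleton (0 : ℝ) |> compl_mem_ae_iff.2] with ω hω
    exact tendsto_two_I_mul_div_sub_I_mul hω (f ω)

/-- The operator `T₂⁻¹` defined by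
`⟨T₂⁻¹φ | ψ*⟩ = -(1/2) lim_{λ→+0} ∫ φψg/(λ - iω) dω` is a left inverse of the
multiplication operator `T₂φ = 2iωφ` in the pairing with `ψ ∈ H₊`: for any
`φ, ψ` bounded holomorphic on the closed upper half plane,
`lim_{x→0⁺} ∫ (2iωφ)ψg/(x - iω) dω = -2 ∫ φψg dω`. -/
theorem T2_inverse
    (δ : ℝ) (hδ : 0 < δ) (g : ℂ → ℂ)
    (hg : ∀ z : ℂ, 0 ≤ z.im ∧ z.im ≤ δ → DifferentiableAt ℂ g z)
    (C : ℝ)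
    (hdecay : ∀ z : ℂ, 0 ≤ z.im ∧ z.im ≤ δ →
      ‖g z‖ ≤ C / (1 + ‖z‖ ^ 2))
    (φ ψ : ℂ → ℂ)
    (hφ : ∀ z : ℂ, 0 ≤ z.im → DifferentiableAt ℂ φ z)
    (hψ : ∀ z : ℂ, 0 ≤ z.im → DifferentiableAt ℂ ψ z)
    (Cφ Cψ : ℝ)
    (hφb : ∀ z : ℂ, 0 ≤ z.im → ‖φ z‖ ≤ Cφ)
    (hψb : ∀ z : ℂ, 0 ≤ z.im → ‖ψ z‖ ≤ Cψ) :
    Tendsto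
      (fun x : ℝ => ∫ ω : ℝ,
        (2 * Complex.I * ω * φ ω) * ψ ω * g ω / ((x : ℂ) - Complex.I * ω))
      (nhdsWithin 0 (Set.Ioi 0))
      (nhds (-2 * ∫ ω : ℝ, φ ω * ψ ω * g ω)) := by
  have hstrip (ω : ℝ) : 0 ≤ (ω : ℂ).im ∧ (ω : ℂ).im ≤ δ := by simpa using hδ.le
  have hcont : Continuous fun ω : ℝ => φ ω * ψ ω * g ω :=
    ((continuous_comp_ofReal fun ω => (hφ ω (hstrip ω).1).continuousAt).mul
      (continuous_comp_ofReal fun ω => (hψ ω (hstrip ω).1).continuousAt)).mul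
      (continuous_comp_ofReal fun ω => (hg ω (hstrip ω)).continuousAt)
  have hbound (ω : ℝ) : ‖φ ω * ψ ω * g ω‖ ≤ Cφ * Cψ * C / (1 + ω ^ 2) := by
    have hφω := hφb ω (hstrip ω).1
    have hψω := hψb ω (hstrip ω).1
    have hgω := hdecay ω (hstrip ω)
    rw [norm_real, norm_eq_abs, sq_abs] at hgω
    have hCφ : 0 ≤ Cφ := (norm_nonneg _).trans hφω
    rw [norm_mul, norm_mul, mul_div_assoc]
    exact mul_le_mul (mul_le_mul hφω hψω (norm_nonneg _) hCφ) hgω (norm_nonneg _)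
      (mul_nonneg hCφ ((norm_nonneg _).trans hψω))
  simpa only [mul_assoc] using (tendsto_integral_two_I_mul_div_sub_I_mul
    (integrable_of_norm_le_div_one_add_sq hcont _ hbound)).mono_left nhdsWithin_le_nhds
end
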